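/- arXiv:1901.02825 — 3 statements merged into one kernel-verified Lean document; each statement's English description precedes it below -/
import Mathlib

section
/- Let $\alpha, \beta, r \in (0,1)$ with $\alpha + \beta = 1$ and $\beta > r$. Then $\lim_{T \to \infty} \frac{1}{T} \log_2 \sum_{t = \lceil (1-r)T \rceil}^{T} \binom{T}{t} \alpha^t \beta^{T-t} = H(r) + r \log_2 \beta + (1-r) \log_2 \alpha$, where $H(r) = -r\log_2 r - (1-r)\log_2(1-r)$. -/
open Filter Real Finset
open scoped Topology

/-!
Let `k = ⌈(1 - r) T⌉`; since `α < 1 - r` the sum is an upper tail of the binomial law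
`B(T, α)`. Comparing its terms with those of `B(T, 1 - r)` (Chernoff) bounds it above by
`(α / (1 - r)) ^ k (β / r) ^ (T - k)`. Below, it contains the term of index `k`, the mode of
`B(T, x)` with `x = k / T`; a mode carries mass at least `1 / (T + 1)`, so that term is at least
`(α / x) ^ k (β / (1 - x)) ^ (T - k) / (T + 1)`. After `(1 / T) log₂`, both bounds are
log-likelihood ratios at `x → 1 - r`, and both tend to `-D(1 - r ‖ α)`, the claimed limit.
-/

namespace Nat

def binomTerm (T k t : ℕ) : ℕ := T.choose t * k ^ t * (T - k) ^ (T - t)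

variable {T k t : ℕ}

theorem choose_mul_sub_le_choose_succ_mul (ht : t < k) :
    T.choose t * (T - k) ≤ T.choose (t + 1) * k := by
  refine Nat.le_of_mul_le_mul_right ?_ t.succ_pos
  calc T.choose t * (T - k) * (t + 1) ≤ T.choose t * ((T - t) * k) := by
        rw [mul_assoc]; exact Nat.mul_le_mul_left _ (Nat.mul_le_mul (by omega) (by omega))
    _ = T.choose (t + 1) * k * (t + 1) := by rw [← mul_assoc, ← choose_succ_right_eq]; ring

theorem choose_succ_mul_le_choose_mul_sub (hk : k ≤ t) :
    T.choose (t + 1) * k ≤ T.choose t * (T - k) := by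
  refine Nat.le_of_mul_le_mul_right ?_ t.succ_pos
  calc T.choose (t + 1) * k * (t + 1) = T.choose t * ((T - t) * k) := by
        rw [mul_right_comm, choose_succ_right_eq, mul_assoc]
    _ ≤ T.choose t * (T - k) * (t + 1) := by
        rw [mul_assoc]; exact Nat.mul_le_mul_left _ (Nat.mul_le_mul (by omega) (by omega))

theorem binomTerm_le_succ (hk : k ≤ T) (ht : t < k) :
    binomTerm T k t ≤ binomTerm T k (t + 1) := by
  have hT : T - t = T - (t + 1) + 1 := by omega
  calc binomTerm T k t = T.choose t * (T - k) * (k ^ t * (T - k) ^ (T - (t + 1))) := by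
        rw [binomTerm, hT, pow_succ]; ring
    _ ≤ T.choose (t + 1) * k * (k ^ t * (T - k) ^ (T - (t + 1))) :=
        Nat.mul_le_mul_right _ (choose_mul_sub_le_choose_succ_mul ht)
    _ = binomTerm T k (t + 1) := by rw [binomTerm, pow_succ]; ring

theorem binomTerm_succ_le (hk : k ≤ t) : binomTerm T k (t + 1) ≤ binomTerm T k t := by
  rcases lt_or_ge t T with ht | ht
  · have hT : T - t = T - (t + 1) + 1 := by omega
    calc binomTerm T k (t + 1) = T.choose (t + 1) * k * (k ^ t * (T - k) ^ (T - (t + 1))) := by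
          rw [binomTerm, pow_succ]; ring
      _ ≤ T.choose t * (T - k) * (k ^ t * (T - k) ^ (T - (t + 1))) :=
          Nat.mul_le_mul_right _ (choose_succ_mul_le_choose_mul_sub hk)
      _ = binomTerm T k t := by rw [binomTerm, hT, pow_succ]; ring
  · simp [binomTerm, choose_eq_zero_of_lt (Nat.lt_succ_of_le ht)]

theorem binomTerm_le_binomTerm_self (hk : k ≤ T) (t : ℕ) :
    binomTerm T k t ≤ binomTerm T k k := by
  rcases le_total t k with htk | hkt
  · refine monotoneOn_of_le_succ Set.ordConnected_Iic (fun a _ _ ha => ?_) htk le_rfl htk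
    rw [Order.succ_eq_add_one] at ha ⊢
    exact binomTerm_le_succ hk ha
  · exact Nat.rel_of_forall_rel_succ_of_le_of_le (· ≥ ·) (fun n hn => binomTerm_succ_le hn)
      le_rfl hkt

theorem pow_self_le_succ_mul_binomTerm (hk : k ≤ T) : T ^ T ≤ (T + 1) * binomTerm T k k := by
  calc T ^ T = ∑ t ∈ range (T + 1), binomTerm T k t := by
        rw [← Nat.add_sub_cancel' hk, add_pow, Nat.add_sub_cancel' hk]
        exact sum_congr rfl fun t _ => by rw [binomTerm, Nat.cast_id]; ring
    _ ≤ ∑ _t ∈ range (T + 1), binomTerm T k k :=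
        sum_le_sum fun t _ => binomTerm_le_binomTerm_self hk t
    _ = (T + 1) * binomTerm T k k := by rw [sum_const, card_range, smul_eq_mul]

end Nat

theorem pow_mul_pow_sub_le_pow_mul_pow_sub {R : Type*} [CommSemiring R] [PartialOrder R]
    [IsOrderedRing R] {a b : R} (ha : 0 ≤ a) (hab : a ≤ b) {k t T : ℕ} (hkt : k ≤ t)
    (htT : t ≤ T) : a ^ t * b ^ (T - t) ≤ a ^ k * b ^ (T - k) := by
  obtain ⟨d, rfl⟩ := Nat.exists_eq_add_of_le hkt
  have hT : T - k = T - (k + d) + d := by omega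
  calc a ^ (k + d) * b ^ (T - (k + d)) = a ^ k * a ^ d * b ^ (T - (k + d)) := by rw [pow_add]
    _ ≤ a ^ k * b ^ d * b ^ (T - (k + d)) := by
        have hb : 0 ≤ b := ha.trans hab
        gcongr
    _ = a ^ k * b ^ (T - k) := by rw [hT, pow_add]; ring

/-- Chernoff's bound: on the tail `t ≥ k`, the ratio of the terms to those of `(p + q) ^ T` is
largest at `t = k`. -/
theorem sum_Icc_choose_mul_pow_mul_pow_le {α β p q : ℝ} (hα : 0 ≤ α) (hβ : 0 ≤ β) (hp : 0 < p)
    (hq : 0 < q) (h : α / p ≤ β / q) (k T : ℕ) :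
    ∑ t ∈ Icc k T, (T.choose t : ℝ) * α ^ t * β ^ (T - t) ≤
      (p + q) ^ T * ((α / p) ^ k * (β / q) ^ (T - k)) := by
  set M := (α / p) ^ k * (β / q) ^ (T - k)
  have hterm : ∀ t ∈ Icc k T,
      (T.choose t : ℝ) * α ^ t * β ^ (T - t) ≤ (T.choose t : ℝ) * p ^ t * q ^ (T - t) * M := by
    intro t ht
    obtain ⟨hkt, htT⟩ := mem_Icc.mp ht
    calc (T.choose t : ℝ) * α ^ t * β ^ (T - t)
        = (T.choose t : ℝ) * p ^ t * q ^ (T - t) * ((α / p) ^ t * (β / q) ^ (T - t)) := by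
          rw [div_pow, div_pow]
          field_simp
      _ ≤ (T.choose t : ℝ) * p ^ t * q ^ (T - t) * M := by
          gcongr
          exact pow_mul_pow_sub_le_pow_mul_pow_sub (by positivity) h hkt htT
  calc ∑ t ∈ Icc k T, (T.choose t : ℝ) * α ^ t * β ^ (T - t)
      ≤ ∑ t ∈ Icc k T, (T.choose t : ℝ) * p ^ t * q ^ (T - t) * M := sum_le_sum hterm
    _ ≤ ∑ t ∈ range (T + 1), (T.choose t : ℝ) * p ^ t * q ^ (T - t) * M := by
        refine sum_le_sum_of_subset_of_nonneg (fun t ht => ?_) (fun t _ _ => by positivity)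
        simp only [mem_Icc, mem_range] at ht ⊢
        omega
    _ = (p + q) ^ T * M := by
        rw [← sum_mul, add_pow]
        exact congrArg (· * M) (sum_congr rfl fun t _ => by ring)

theorem inv_succ_le_choose_mul_pow_mul_pow {k T : ℕ} (hk : k ≤ T) (hT : 0 < T) :
    1 / ((T : ℝ) + 1) ≤ T.choose k * ((k : ℝ) / T) ^ k * (1 - (k : ℝ) / T) ^ (T - k) := by
  have hT' : (0 : ℝ) < T := by exact_mod_cast hT
  have hmode : (T : ℝ) ^ T ≤
      (T + 1) * (T.choose k * (k : ℝ) ^ k * ((T - k : ℕ) : ℝ) ^ (T - k)) := by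
    exact_mod_cast Nat.pow_self_le_succ_mul_binomTerm hk
  have hsplit : (T : ℝ) ^ T = (T : ℝ) ^ k * (T : ℝ) ^ (T - k) := by
    rw [← pow_add, Nat.add_sub_cancel' hk]
  rw [div_le_iff₀ (by positivity), one_sub_div hT'.ne', div_pow, div_pow, ← Nat.cast_sub hk]
  rw [hsplit] at hmode
  field_simp
  linarith

theorem tendsto_natCeil_mul_div {c : ℝ} (hc : 0 < c) :
    Tendsto (fun T : ℕ => (⌈c * T⌉₊ : ℝ) / T) atTop (𝓝 c) := by
  have h := (tendsto_nat_ceil_div_atTop (R := ℝ)).comp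
    ((tendsto_natCast_atTop_atTop (R := ℝ)).const_mul_atTop hc)
  convert h.mul_const c using 1
  · funext T
    simp only [Function.comp_apply]
    field_simp
  · rw [one_mul]

theorem tendsto_logb_succ_div_atTop :
    Tendsto (fun T : ℕ => logb 2 ((T : ℝ) + 1) / T) atTop (𝓝 0) := by
  have h := (tendsto_pow_log_div_mul_add_atTop 1 (-1) 1 one_ne_zero).comp
    (tendsto_atTop_add_const_right atTop 1 (tendsto_natCast_atTop_atTop (R := ℝ)))
  convert h.div_const (log 2) using 1
  · funext T
    simp [logb, div_right_comm]
  · rw [zero_div]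

theorem one_div_mul_logb_pow_mul_pow {a b : ℝ} (ha : a ≠ 0) (hb : b ≠ 0) {k T : ℕ} (hk : k ≤ T)
    (hT : 0 < T) :
    1 / (T : ℝ) * logb 2 (a ^ k * b ^ (T - k)) = k / T * logb 2 a + (1 - k / T) * logb 2 b := by
  have hT' : (T : ℝ) ≠ 0 := by positivity
  rw [logb_mul (pow_ne_zero _ ha) (pow_ne_zero _ hb), logb_pow, logb_pow, Nat.cast_sub hk]
  field_simp

/-- Per-trial log-likelihood ratio, in bits, of success/failure probabilities `(α, β)` against
`(y, 1 - y)` on trials with a fraction `x` of successes; at `y = x` and `β = 1 - α` it is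
`-D(x ‖ α)`. -/
noncomputable def logLikelihoodRatio (α β x y : ℝ) : ℝ :=
  x * logb 2 (α / y) + (1 - x) * logb 2 (β / (1 - y))

section

variable {α β : ℝ}

theorem one_div_mul_logb_sum_le_logLikelihoodRatio (hα : 0 < α) (hβ : 0 < β) {y : ℝ}
    (hy0 : 0 < y) (hy1 : y < 1) (h : α / y ≤ β / (1 - y)) {k T : ℕ} (hk : k ≤ T) (hT : 0 < T) :
    1 / (T : ℝ) * logb 2 (∑ t ∈ Icc k T, (T.choose t : ℝ) * α ^ t * β ^ (T - t)) ≤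
      logLikelihoodRatio α β (k / T) y := by
  have hpos : 0 < ∑ t ∈ Icc k T, (T.choose t : ℝ) * α ^ t * β ^ (T - t) :=
    sum_pos (fun t ht => by have := Nat.choose_pos (mem_Icc.mp ht).2; positivity)
      (nonempty_Icc.mpr hk)
  have hchernoff := sum_Icc_choose_mul_pow_mul_pow_le hα.le hβ.le hy0 (sub_pos.mpr hy1) h k T
  rw [add_sub_cancel, one_pow, one_mul] at hchernoff
  rw [logLikelihoodRatio, ← one_div_mul_logb_pow_mul_pow (by positivity)
    (div_pos hβ (sub_pos.mpr hy1)).ne' hk hT]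
  exact mul_le_mul_of_nonneg_left (logb_le_logb_of_le one_lt_two hpos hchernoff) (by positivity)

theorem logLikelihoodRatio_sub_le_one_div_mul_logb_sum (hα : 0 < α) (hβ : 0 < β) {k T : ℕ}
    (hk : 0 < k) (hkT : k < T) :
    logLikelihoodRatio α β (k / T) (k / T) - logb 2 ((T : ℝ) + 1) / T ≤
      1 / (T : ℝ) * logb 2 (∑ t ∈ Icc k T, (T.choose t : ℝ) * α ^ t * β ^ (T - t)) := by
  set x : ℝ := k / T with hx
  have hT : (0 : ℝ) < T := by exact_mod_cast hk.trans hkT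
  have hx0 : 0 < x := by positivity
  have hx1 : 0 < 1 - x := by
    rw [hx, sub_pos, div_lt_one hT]; exact_mod_cast hkT
  set A := (α / x) ^ k * (β / (1 - x)) ^ (T - k)
  have hA : 0 < A := by positivity
  have hmode : A / ((T : ℝ) + 1) ≤ (T.choose k : ℝ) * α ^ k * β ^ (T - k) := by
    have h := mul_le_mul_of_nonneg_right (inv_succ_le_choose_mul_pow_mul_pow hkT.le (hk.trans hkT))
      hA.le
    calc A / ((T : ℝ) + 1) = 1 / ((T : ℝ) + 1) * A := by ring
      _ ≤ _ := h
      _ = (T.choose k : ℝ) * α ^ k * β ^ (T - k) := by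
        rw [← hx]; simp only [A, div_pow]; field_simp
  have hterm : (T.choose k : ℝ) * α ^ k * β ^ (T - k) ≤
      ∑ t ∈ Icc k T, (T.choose t : ℝ) * α ^ t * β ^ (T - t) :=
    single_le_sum (f := fun t => (T.choose t : ℝ) * α ^ t * β ^ (T - t))
      (fun t _ => by positivity) (mem_Icc.mpr ⟨le_rfl, hkT.le⟩)
  calc logLikelihoodRatio α β x x - logb 2 ((T : ℝ) + 1) / T
      = 1 / (T : ℝ) * logb 2 (A / ((T : ℝ) + 1)) := by
        rw [logb_div hA.ne' (by positivity), mul_sub,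
          one_div_mul_logb_pow_mul_pow (by positivity) (by positivity) hkT.le (hk.trans hkT),
          logLikelihoodRatio]
        ring
    _ ≤ 1 / (T : ℝ) * logb 2 (∑ t ∈ Icc k T, (T.choose t : ℝ) * α ^ t * β ^ (T - t)) :=
        mul_le_mul_of_nonneg_left
          (logb_le_logb_of_le one_lt_two (by positivity) (hmode.trans hterm)) (by positivity)

theorem Filter.Tendsto.logLikelihoodRatio {ι : Type*} {l : Filter ι} {u v : ι → ℝ} {x y : ℝ}
    (hα : α ≠ 0) (hβ : β ≠ 0) (hy0 : y ≠ 0) (hy1 : y ≠ 1) (hu : Tendsto u l (𝓝 x))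
    (hv : Tendsto v l (𝓝 y)) :
    Tendsto (fun i => logLikelihoodRatio α β (u i) (v i)) l (𝓝 (logLikelihoodRatio α β x y)) := by
  have h1y : 1 - y ≠ 0 := sub_ne_zero.mpr hy1.symm
  exact (hu.mul ((tendsto_const_nhds.div hv hy0).logb (div_ne_zero hα hy0))).add
    ((tendsto_const_nhds.sub hu).mul
      ((tendsto_const_nhds.div (tendsto_const_nhds.sub hv) h1y).logb (div_ne_zero hβ h1y)))

end

theorem large_deviation_rate_beta_gt_r
    (α β r : ℝ) (hα : α ∈ Set.Ioo (0:ℝ) 1) (hβ : β ∈ Set.Ioo (0:ℝ) 1)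
    (hr : r ∈ Set.Ioo (0:ℝ) 1) (hsum : α + β = 1) (hβr : r < β) :
    Tendsto (fun T : ℕ =>
        (1 / (T : ℝ)) * Real.logb 2
          (∑ t ∈ Finset.Icc ⌈(1 - r) * (T : ℝ)⌉₊ T,
            (T.choose t : ℝ) * α ^ t * β ^ (T - t)))
      atTop
      (nhds ((-r * Real.logb 2 r - (1 - r) * Real.logb 2 (1 - r))
        + r * Real.logb 2 β + (1 - r) * Real.logb 2 α)) := by
  obtain ⟨hα0, -⟩ := hα
  obtain ⟨hβ0, -⟩ := hβ
  obtain ⟨hr0, hr1⟩ := hr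
  have hp : 0 < 1 - r := sub_pos.mpr hr1
  have hx := tendsto_natCeil_mul_div hp
  have hp0 : 1 - r ≠ 0 := hp.ne'
  have hp1 : 1 - r ≠ 1 := by linarith
  have hlimit : (-r * logb 2 r - (1 - r) * logb 2 (1 - r)) + r * logb 2 β + (1 - r) * logb 2 α =
      logLikelihoodRatio α β (1 - r) (1 - r) := by
    rw [logLikelihoodRatio, sub_sub_cancel, logb_div hα0.ne' hp0, logb_div hβ0.ne' hr0.ne']
    ring
  rw [hlimit]
  have hlower := (hx.logLikelihoodRatio hα0.ne' hβ0.ne' hp0 hp1 hx).sub tendsto_logb_succ_div_atTop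
  rw [sub_zero] at hlower
  refine tendsto_of_tendsto_of_tendsto_of_le_of_le' hlower
    (hx.logLikelihoodRatio hα0.ne' hβ0.ne' hp0 hp1 tendsto_const_nhds) ?_ ?_
  · filter_upwards [eventually_gt_atTop 0, hx.eventually_const_lt hp,
      hx.eventually_lt_const (sub_lt_self 1 hr0)] with T hT hk0 hk1
    have hT' : (0 : ℝ) < T := Nat.cast_pos.mpr hT
    refine logLikelihoodRatio_sub_le_one_div_mul_logb_sum hα0 hβ0 ?_ ?_
    · exact_mod_cast (div_pos_iff_of_pos_right hT').mp hk0
    · exact_mod_cast (div_lt_one hT').mp hk1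
  · filter_upwards [eventually_gt_atTop 0] with T hT
    refine one_div_mul_logb_sum_le_logLikelihoodRatio hα0 hβ0 hp (by linarith) ?_
      (Nat.ceil_le.mpr ?_) hT
    · rw [sub_sub_cancel, div_le_div_iff₀ hp hr0]
      linear_combination hβr + r * hsum
    · nlinarith [(T.cast_nonneg : (0 : ℝ) ≤ T)]
end

section
/- Let $T : X \to X$ be a continuous map on a compact metric space $X$ and let $\alpha : \mathbb{Z}_+ \times X \to \mathbb{R}$ be a continuous additive cocycle over $T$, i.e., $\alpha_{n+m}(x) = \alpha_n(x) + \alpha_m(T^n x)$ for all $n,m \in \mathbb{Z}_+$ and $x \in X$, with each $\alpha_n$ continuous. Then $\inf_{x \in X} \liminf_{n \to \infty} \frac{1}{n}\alpha_n(x) = \inf_{x \in X} \limsup_{n \to \infty} \frac{1}{n}\alpha_n(x) = \lim_{n \to \infty} \frac{1}{n} \inf_{x \in X} \alpha_n(x) = \sup_{n \ge 1} \frac{1}{n} \inf_{x \in X} \alpha_n(x)$. -/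
open Filter

theorem additive_cocycle_growth_rates
    {X : Type*} [MetricSpace X] [CompactSpace X] [Nonempty X]
    (T : X → X) (hT : Continuous T)
    (α : ℕ → X → ℝ)
    (hcont : ∀ n, Continuous (α n))
    (hcoc : ∀ n m x, α (n + m) x = α n x + α m (T^[n] x)) :
    (⨅ x : X, liminf (fun n : ℕ => α n x / n) atTop)
      = (⨅ x : X, limsup (fun n : ℕ => α n x / n) atTop) ∧
    Tendsto (fun n : ℕ => (⨅ x : X, α n x) / n) atTop
      (nhds (⨅ x : X, liminf (fun n : ℕ => α n x / n) atTop)) ∧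
    (⨆ n : {n : ℕ // 1 ≤ n}, (⨅ x : X, α n.1 x) / (n.1 : ℝ))
      = (⨅ x : X, liminf (fun n : ℕ => α n x / n) atTop) := by
  -- α 0 = 0
  have hα0 : ∀ x, α 0 x = 0 := by
    intro x; have := hcoc 0 0 x; simp at this; linarith [this]
  set u : ℕ → ℝ := fun n => ⨅ x, α n x with hu_def
  -- infimum is attained
  have hmin : ∀ n : ℕ, ∃ x₀ : X, ∀ x, α n x₀ ≤ α n x := by
    intro n
    obtain ⟨x₀, -, h⟩ := isCompact_univ.exists_isMinOn Set.univ_nonempty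
      (hcont n).continuousOn
    exact ⟨x₀, fun x => h (Set.mem_univ x)⟩
  have hbdd : ∀ n : ℕ, BddBelow (Set.range (α n)) := by
    intro n; obtain ⟨x₀, h⟩ := hmin n
    exact ⟨α n x₀, by rintro - ⟨x, rfl⟩; exact h x⟩
  have hu_le : ∀ n x, u n ≤ α n x := fun n x => ciInf_le (hbdd n) x
  have hu_attain : ∀ n : ℕ, ∃ x₀, u n = α n x₀ := by
    intro n; obtain ⟨x₀, h⟩ := hmin n
    exact ⟨x₀, le_antisymm (hu_le n x₀) (le_ciInf h)⟩
  -- superadditivity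
  have hsuper : ∀ n m, u n + u m ≤ u (n + m) := by
    intro n m
    refine le_ciInf fun x => ?_
    rw [hcoc n m x]
    exact add_le_add (hu_le n x) (hu_le m _)
  have hu0 : u 0 = 0 := by
    simp [hu_def, hα0]
  -- bound A on |α 1|
  obtain ⟨xM, -, hxM⟩ := isCompact_univ.exists_isMaxOn Set.univ_nonempty
    ((hcont 1).abs).continuousOn
  set A : ℝ := |α 1 xM| with hA_def
  have hA0 : 0 ≤ A := abs_nonneg _
  have hA : ∀ x, |α 1 x| ≤ A := fun x => hxM (Set.mem_univ x)
  have habs : ∀ n x, |α n x| ≤ n * A := by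
    intro n
    induction n with
    | zero => intro x; simp [hα0]
    | succ n ih =>
      intro x
      have h := hcoc n 1 x
      have h1 := ih x
      have h2 := hA (T^[n] x)
      rw [h]
      calc |α n x + α 1 (T^[n] x)| ≤ |α n x| + |α 1 (T^[n] x)| := abs_add_le _ _
        _ ≤ n * A + A := add_le_add h1 h2
        _ = (n + 1 : ℕ) * A := by push_cast; ring
  have habsu : ∀ n, |u n| ≤ n * A := by
    intro n
    obtain ⟨x₀, hx₀⟩ := hu_attain n
    rw [hx₀]; exact habs n x₀
  -- Fekete via Subadditive on -u
  have hsub : Subadditive (fun n => -u n) := by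
    intro m n; have := hsuper m n; simp only; linarith
  have hsubbdd : BddBelow (Set.range fun n : ℕ => (-u n) / n) := by
    refine ⟨-A, ?_⟩
    rintro - ⟨n, rfl⟩
    show -A ≤ -u n / (n:ℝ)
    rcases Nat.eq_zero_or_pos n with rfl | hn
    · simpa [hu0] using hA0
    · have hn' : (0:ℝ) < n := by exact_mod_cast hn
      rw [neg_div, le_neg, neg_neg]
      have h1 : u n / n ≤ ((n:ℝ) * A) / n := by
        gcongr
        exact (abs_le.1 (habsu n)).2
      have h2 : (n:ℝ) * A / n = A := by field_simp
      linarith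
  have htendneg := hsub.tendsto_lim hsubbdd
  set L : ℝ := -hsub.lim with hL_def
  have hL : Tendsto (fun n : ℕ => u n / n) atTop (nhds L) := by
    have := htendneg.neg
    simp only [neg_div, neg_neg] at this
    exact this
  -- u n / n ≤ L for n ≥ 1
  have hunL : ∀ n : ℕ, 1 ≤ n → u n / n ≤ L := by
    intro n hn
    have hkn : ∀ k : ℕ, (k : ℝ) * u n ≤ u (k * n) := by
      intro k
      induction k with
      | zero => simp [hu0]
      | succ k ih =>
        have := hsuper (k * n) n
        calc ((k+1 : ℕ) : ℝ) * u n = (k:ℝ) * u n + u n := by push_cast; ring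
          _ ≤ u (k * n) + u n := by linarith
          _ ≤ u (k * n + n) := this
          _ = u ((k+1) * n) := by ring_nf
    have hmono : Tendsto (fun k : ℕ => k * n) atTop atTop :=
      tendsto_atTop_mono (fun k => Nat.le_mul_of_pos_right k hn) tendsto_id
    have hsubseq : Tendsto (fun k : ℕ => u (k * n) / ((k * n : ℕ) : ℝ)) atTop (nhds L) :=
      hL.comp hmono
    refine ge_of_tendsto hsubseq ?_
    filter_upwards [eventually_ge_atTop 1] with k hk
    have hk' : (0:ℝ) < k := by exact_mod_cast hk
    have hn' : (0:ℝ) < n := by exact_mod_cast hn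
    have hkn' : (0:ℝ) < ((k * n : ℕ) : ℝ) := by push_cast; positivity
    have h1 : (k:ℝ) * u n ≤ u (k * n) := hkn k
    rw [div_le_div_iff₀ hn' hkn']
    push_cast
    nlinarith
  -- the covering lemma: if every point has some average above c, then c ≤ L
  have key : ∀ c : ℝ, (∀ x : X, ∃ n : ℕ, 1 ≤ n ∧ (n:ℝ) * c < α n x) → c ≤ L := by
    intro c hc
    choose nf hnf1 hnf2 using hc
    set U : X → Set X := fun x => {y | (nf x : ℝ) * c < α (nf x) y} with hU
    have hUopen : ∀ x, IsOpen (U x) := fun x =>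
      isOpen_lt continuous_const (hcont (nf x))
    have hcover : Set.univ ⊆ ⋃ x, U x := fun y _ => Set.mem_iUnion.2 ⟨y, hnf2 y⟩
    obtain ⟨t, ht⟩ := isCompact_univ.elim_finite_subcover U hUopen hcover
    set N : ℕ := t.sup nf with hN_def
    have claim1 : ∀ y : X, ∃ s, 1 ≤ s ∧ s ≤ N ∧ (s:ℝ) * c < α s y := by
      intro y
      have := ht (Set.mem_univ y)
      rw [Set.mem_iUnion₂] at this
      obtain ⟨x, hx, hy⟩ := this
      exact ⟨nf x, hnf1 x, Finset.le_sup hx, hy⟩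
    have hN1 : 1 ≤ N := by
      obtain ⟨s, h1, h2, -⟩ := claim1 (Classical.arbitrary X); omega
    have claim2 : ∀ m : ℕ, ∀ y : X, ∃ p, m ≤ p ∧ p ≤ m + N ∧ (p:ℝ) * c ≤ α p y := by
      intro m
      induction m using Nat.strong_induction_on with
      | _ m ih =>
        intro y
        obtain ⟨s, hs1, hs2, hs3⟩ := claim1 y
        by_cases hms : m ≤ s
        · exact ⟨s, hms, le_trans hs2 (Nat.le_add_left N m), le_of_lt hs3⟩
        · push_neg at hms
          obtain ⟨p, hp1, hp2, hp3⟩ := ih (m - s) (by omega) (T^[s] y)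
          refine ⟨s + p, by omega, by omega, ?_⟩
          rw [hcoc s p y]
          have he : ((s + p : ℕ) : ℝ) * c = (s:ℝ) * c + (p:ℝ) * c := by push_cast; ring
          rw [he]
          exact add_le_add (le_of_lt hs3) hp3
    set K : ℝ := (N:ℝ) * |c| + (N:ℝ) * A with hK_def
    have hlow : ∀ m : ℕ, (m:ℝ) * c - K ≤ u (m + N) := by
      intro m
      refine le_ciInf fun y => ?_
      obtain ⟨p, hp1, hp2, hp3⟩ := claim2 m y
      have hdecomp : α (m + N) y = α p y + α (m + N - p) (T^[p] y) := by
        have h := hcoc p (m + N - p) y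
        rw [← h]
        congr 1
        omega
      have h4 := habs (m + N - p) (T^[p] y)
      have h5 : ((m + N - p : ℕ):ℝ) ≤ (N:ℝ) := by exact_mod_cast (by omega : m + N - p ≤ N)
      have h5' : (0:ℝ) ≤ ((m + N - p : ℕ):ℝ) := Nat.cast_nonneg _
      have h6 : (p:ℝ) ≤ (m:ℝ) + (N:ℝ) := by exact_mod_cast (by push_cast; exact_mod_cast hp2 : (p:ℝ) ≤ ((m + N : ℕ):ℝ))
      have h7 : (m:ℝ) ≤ (p:ℝ) := by exact_mod_cast hp1
      have h8 := (abs_le.1 h4).1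
      rw [hdecomp]
      have e3 : ((p:ℝ) - m) * c = (p:ℝ) * c - (m:ℝ) * c := by ring
      have e1 : ((p:ℝ) - m) * (-|c|) ≤ ((p:ℝ) - m) * c :=
        mul_le_mul_of_nonneg_left (neg_abs_le c) (by linarith)
      have e2 : -((N:ℝ) * |c|) ≤ ((p:ℝ) - m) * (-|c|) := by
        nlinarith [abs_nonneg c]
      have e4 : -((N:ℝ) * A) ≤ -(((m + N - p : ℕ):ℝ) * A) := by nlinarith
      rw [hK_def]
      linarith
    have hcomp : Tendsto (fun m : ℕ => u (m + N) / ((m + N : ℕ):ℝ)) atTop (nhds L) :=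
      hL.comp (tendsto_add_atTop_nat N)
    have hKlim : Tendsto (fun m : ℕ => ((m:ℝ) * c - K) / ((m:ℝ) + (N:ℝ))) atTop (nhds c) := by
      have hden : Tendsto (fun m : ℕ => (m:ℝ) + (N:ℝ)) atTop atTop :=
        tendsto_atTop_add_const_right atTop (N:ℝ) tendsto_natCast_atTop_atTop
      have h0 : Tendsto (fun m : ℕ => ((N:ℝ) * c + K) / ((m:ℝ) + (N:ℝ))) atTop (nhds 0) :=
        tendsto_const_nhds.div_atTop hden
      have h1 := (tendsto_const_nhds (α := ℕ) (f := atTop) (x := c)).sub h0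
      rw [sub_zero] at h1
      refine h1.congr fun m => ?_
      have hN' : (0:ℝ) < (N:ℝ) := by exact_mod_cast hN1
      have hm : (0:ℝ) < (m:ℝ) + (N:ℝ) := by positivity
      field_simp
      ring
    refine le_of_tendsto_of_tendsto' hKlim hcomp fun m => ?_
    have hN' : (0:ℝ) < (N:ℝ) := by exact_mod_cast hN1
    have hm : (0:ℝ) < ((m + N : ℕ):ℝ) := by push_cast; positivity
    have hcast : ((m + N : ℕ):ℝ) = (m:ℝ) + (N:ℝ) := by push_cast; ring
    rw [hcast]
    have := hlow m
    apply div_le_div_of_nonneg_right ?_ (by positivity)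
    · rwa [← hcast] at *
      
  -- boundedness of the sequences α n x / n
  have hbddseq : ∀ (x : X) (n : ℕ), |α n x / (n:ℝ)| ≤ A := by
    intro x n
    rcases Nat.eq_zero_or_pos n with rfl | hn
    · simpa [hα0 x] using hA0
    · have hn' : (0:ℝ) < n := by exact_mod_cast hn
      rw [abs_div, abs_of_pos hn', div_le_iff₀ hn']
      calc |α n x| ≤ (n:ℝ) * A := habs n x
        _ = A * n := by ring
  have hblo : ∀ x : X, IsBoundedUnder (· ≥ ·) atTop (fun n : ℕ => α n x / n) :=
    fun x => isBoundedUnder_of ⟨-A, fun n => (abs_le.1 (hbddseq x n)).1⟩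
  have hbhi : ∀ x : X, IsBoundedUnder (· ≤ ·) atTop (fun n : ℕ => α n x / n) :=
    fun x => isBoundedUnder_of ⟨A, fun n => (abs_le.1 (hbddseq x n)).2⟩
  have hulo : IsBoundedUnder (· ≥ ·) atTop (fun n : ℕ => u n / n) := by
    refine isBoundedUnder_of ⟨-A, fun n => ?_⟩
    rcases Nat.eq_zero_or_pos n with rfl | hn
    · simpa [hu0] using hA0
    · have hn' : (0:ℝ) < n := by exact_mod_cast hn
      have h1 := (abs_le.1 (habsu n)).1
      rw [ge_iff_le, le_div_iff₀ hn']
      nlinarith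
  have hliminf_ge : ∀ x : X, L ≤ liminf (fun n : ℕ => α n x / n) atTop := by
    intro x
    have h1 : liminf (fun n : ℕ => u n / n) atTop = L := hL.liminf_eq
    rw [← h1]
    refine liminf_le_liminf ?_ hulo ((hbhi x).isCoboundedUnder_ge)
    filter_upwards with n
    rcases Nat.eq_zero_or_pos n with rfl | hn
    · simp [hu0, hα0 x]
    · have hn' : (0:ℝ) < n := by exact_mod_cast hn
      exact div_le_div_of_nonneg_right (hu_le n x) (le_of_lt hn')
  have hll : ∀ x : X, liminf (fun n : ℕ => α n x / n) atTop
      ≤ limsup (fun n : ℕ => α n x / n) atTop :=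
    fun x => liminf_le_limsup (hbhi x) (hblo x)
  have hbddliminf : BddBelow (Set.range fun x : X => liminf (fun n : ℕ => α n x / n) atTop) :=
    ⟨L, by rintro - ⟨x, rfl⟩; exact hliminf_ge x⟩
  have hbddlimsup : BddBelow (Set.range fun x : X => limsup (fun n : ℕ => α n x / n) atTop) :=
    ⟨L, by rintro - ⟨x, rfl⟩; exact (hliminf_ge x).trans (hll x)⟩
  have hIhigh_le : (⨅ x : X, limsup (fun n : ℕ => α n x / n) atTop) ≤ L := by
    by_contra hlt
    push_neg at hlt
    set I := ⨅ x : X, limsup (fun n : ℕ => α n x / n) atTop with hI_def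
    set c : ℝ := (L + I) / 2 with hc_def
    have hc1 : L < c := by rw [hc_def]; linarith
    have hc2 : c < I := by rw [hc_def]; linarith
    have hstep : ∀ x : X, ∃ n : ℕ, 1 ≤ n ∧ (n:ℝ) * c < α n x := by
      intro x
      by_contra h
      push_neg at h
      have hls : limsup (fun n : ℕ => α n x / n) atTop ≤ c := by
        refine limsup_le_of_le ((hblo x).isCoboundedUnder_le) ?_
        filter_upwards [eventually_ge_atTop 1] with n hn
        have hn' : (0:ℝ) < n := by exact_mod_cast hn
        rw [div_le_iff₀ hn']
        have := h n hn
        linarith [mul_comm c (n:ℝ)]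
      have h2 : I ≤ limsup (fun n : ℕ => α n x / n) atTop := ciInf_le hbddlimsup x
      linarith
    linarith [key c hstep]
  have hIlow_ge : L ≤ ⨅ x : X, liminf (fun n : ℕ => α n x / n) atTop := le_ciInf hliminf_ge
  have hIlowhigh : (⨅ x : X, liminf (fun n : ℕ => α n x / n) atTop)
      ≤ ⨅ x : X, limsup (fun n : ℕ => α n x / n) atTop := ciInf_mono hbddliminf hll
  have hIloweq : (⨅ x : X, liminf (fun n : ℕ => α n x / n) atTop) = L :=
    le_antisymm (hIlowhigh.trans hIhigh_le) hIlow_ge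
  refine ⟨le_antisymm hIlowhigh (hIhigh_le.trans hIlow_ge), ?_, ?_⟩
  · rw [hIloweq]; exact hL
  · rw [hIloweq]
    have hbdd2 : BddAbove (Set.range fun n : {n : ℕ // 1 ≤ n} => u n.1 / (n.1 : ℝ)) :=
      ⟨L, by rintro - ⟨⟨n, hn⟩, rfl⟩; exact hunL n hn⟩
    refine le_antisymm (ciSup_le fun n => hunL n.1 n.2) ?_
    refine le_of_tendsto hL ?_
    filter_upwards [eventually_ge_atTop 1] with n hn
    exact le_ciSup hbdd2 (⟨n, hn⟩ : {n : ℕ // 1 ≤ n})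
end

section
/- Let $T : X \to X$ be a continuous map on a compact metric space $X$ and $\alpha$ a continuous additive cocycle over $T$. Then there exists a point $x^* \in X$ attaining the infimum: $\liminf_{n \to \infty} \frac{1}{n}\alpha_n(x^*) = \inf_{x \in X} \liminf_{n \to \infty} \frac{1}{n}\alpha_n(x)$. -/
open Filter

open Filter Set

set_option linter.unusedSectionVars false

section
variable {X : Type*} [MetricSpace X] [CompactSpace X] [Nonempty X]
  {T : X → X} {α : ℕ → X → ℝ}

lemma aux_zero (hcoc : ∀ n m x, α (n + m) x = α n x + α m (T^[n] x)) (x : X) :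
    α 0 x = 0 := by
  have := hcoc 0 0 x
  simp at this
  linarith

lemma aux_exists_bound (hcont : Continuous (α 1)) :
    ∃ c : ℝ, 0 ≤ c ∧ ∀ x, |α 1 x| ≤ c := by
  obtain ⟨x₀, -, hx₀⟩ := isCompact_univ.exists_isMaxOn univ_nonempty hcont.abs.continuousOn
  exact ⟨|α 1 x₀|, abs_nonneg _, fun x => hx₀ (mem_univ x)⟩

lemma aux_abs_le (hcoc : ∀ n m x, α (n + m) x = α n x + α m (T^[n] x))
    {c : ℝ} (hc : ∀ x, |α 1 x| ≤ c) : ∀ m x, |α m x| ≤ m * c := by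
  intro m
  induction m with
  | zero => intro x; simp [aux_zero hcoc]
  | succ n ih =>
    intro x
    have h1 := hcoc n 1 x
    have h2 := ih x
    have h3 := hc (T^[n] x)
    have := abs_add_le (α n x) (α 1 (T^[n] x))
    push_cast
    rw [h1]
    nlinarith [abs_nonneg (α n x)]
end

noncomputable def SSup {X : Type*} [MetricSpace X] [CompactSpace X] [Nonempty X]
    (α : ℕ → X → ℝ) : ℝ := ⨆ m : ℕ, (⨅ x, α (m+1) x) / (m+1)

section
variable {X : Type*} [MetricSpace X] [CompactSpace X] [Nonempty X]
  {T : X → X} {α : ℕ → X → ℝ} {c : ℝ}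

lemma aux_bddBelow (hcoc : ∀ n m x, α (n + m) x = α n x + α m (T^[n] x))
    (hc : ∀ x, |α 1 x| ≤ c) (m : ℕ) : BddBelow (Set.range (α m)) := by
  refine ⟨-(m*c), ?_⟩
  rintro r ⟨x, rfl⟩
  have := aux_abs_le hcoc hc m x
  exact neg_le_of_abs_le this

lemma aux_inf_le (hcoc : ∀ n m x, α (n + m) x = α n x + α m (T^[n] x))
    (hc : ∀ x, |α 1 x| ≤ c) (m : ℕ) (x : X) : (⨅ y, α m y) ≤ α m x :=
  ciInf_le (aux_bddBelow hcoc hc m) x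

lemma aux_inf_abs_le (hcoc : ∀ n m x, α (n + m) x = α n x + α m (T^[n] x))
    (hc : ∀ x, |α 1 x| ≤ c) (hcont : ∀ n, Continuous (α n)) (m : ℕ) :
    |⨅ y, α m y| ≤ m * c := by
  obtain ⟨x₀, -, hx₀⟩ := isCompact_univ.exists_isMinOn univ_nonempty (hcont m).continuousOn
  have heq : (⨅ y, α m y) = α m x₀ :=
    le_antisymm (aux_inf_le hcoc hc m x₀) (le_ciInf fun y => hx₀ (Set.mem_univ y))
  rw [heq]; exact aux_abs_le hcoc hc m x₀

lemma aux_inf_attained (hcont : ∀ n, Continuous (α n)) (m : ℕ) :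
    ∃ x₀ : X, α m x₀ = ⨅ y, α m y := by
  obtain ⟨x₀, -, hx₀⟩ := isCompact_univ.exists_isMinOn univ_nonempty (hcont m).continuousOn
  exact ⟨x₀, le_antisymm (le_ciInf fun y => hx₀ (Set.mem_univ y))
    (ciInf_le ⟨α m x₀, by rintro r ⟨y, rfl⟩; exact hx₀ (Set.mem_univ y)⟩ x₀)⟩

lemma aux_le_SSup (hcoc : ∀ n m x, α (n + m) x = α n x + α m (T^[n] x))
    (hc : 0 ≤ c ∧ ∀ x, |α 1 x| ≤ c) (hcont : ∀ n, Continuous (α n)) (m : ℕ) :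
    (⨅ x, α (m+1) x) / (m+1) ≤ SSup α := by
  unfold SSup
  refine le_ciSup (f := fun m : ℕ => (⨅ x, α (m+1) x) / ((m:ℝ)+1)) ⟨c, ?_⟩ m
  rintro r ⟨k, rfl⟩
  have h1 := aux_inf_abs_le hcoc hc.2 hcont (k+1)
  have hk : (0:ℝ) < (k:ℝ)+1 := by positivity
  rw [div_le_iff₀ hk]
  have := le_of_abs_le h1
  push_cast at this ⊢
  linarith

lemma aux_SSup_abs_le (hcoc : ∀ n m x, α (n + m) x = α n x + α m (T^[n] x))
    (hc : 0 ≤ c ∧ ∀ x, |α 1 x| ≤ c) (hcont : ∀ n, Continuous (α n)) :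
    |SSup α| ≤ c := by
  rw [abs_le]
  constructor
  · have h := aux_le_SSup hcoc hc hcont 0
    have h1 := aux_inf_abs_le hcoc hc.2 hcont 1
    rw [abs_le] at h1
    norm_num at h h1
    nlinarith [h, h1.1]
  · unfold SSup
    refine ciSup_le fun m => ?_
    have h1 := aux_inf_abs_le hcoc hc.2 hcont (m+1)
    have hk : (0:ℝ) < (m:ℝ)+1 := by positivity
    rw [div_le_iff₀ hk]
    have := le_of_abs_le h1
    push_cast at this ⊢
    linarith
end

section
variable {X : Type*} [MetricSpace X] [CompactSpace X] [Nonempty X]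
  {T : X → X} {α : ℕ → X → ℝ} {c : ℝ}

lemma aux_div_abs_le (hcoc : ∀ n m x, α (n + m) x = α n x + α m (T^[n] x))
    (hc : 0 ≤ c ∧ ∀ x, |α 1 x| ≤ c) : ∀ (n : ℕ) (x : X), |α n x / n| ≤ c := by
  intro n x
  rcases Nat.eq_zero_or_pos n with h | h
  · subst h; simp [aux_zero hcoc, hc.1]
  · have hnpos : (0:ℝ) < (n:ℕ) := by exact_mod_cast h
    rw [abs_div, abs_of_pos hnpos, div_le_iff₀ hnpos]
    rw [mul_comm]
    exact aux_abs_le hcoc hc.2 n x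

lemma aux_blocks (hcoc : ∀ n m x, α (n + m) x = α n x + α m (T^[n] x))
    (hc : ∀ x, |α 1 x| ≤ c) (m' : ℕ) :
    ∀ (q r : ℕ) (x : X), (q:ℝ) * (⨅ y, α m' y) - r * c ≤ α (m' * q + r) x := by
  intro q
  induction q with
  | zero =>
    intro r x
    simp only [Nat.mul_zero, Nat.zero_add, Nat.cast_zero, zero_mul, zero_sub]
    exact neg_le_of_abs_le (aux_abs_le hcoc hc r x)
  | succ q ih =>
    intro r x
    have harith : m' * (q + 1) + r = m' + (m' * q + r) := by ring
    rw [harith, hcoc m' (m' * q + r) x]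
    have h1 := aux_inf_le hcoc hc m' x
    have h2 := ih r (T^[m'] x)
    push_cast
    linarith

lemma aux_liminf_ge (hcoc : ∀ n m x, α (n + m) x = α n x + α m (T^[n] x))
    (hc : 0 ≤ c ∧ ∀ x, |α 1 x| ≤ c) (hcont : ∀ n, Continuous (α n)) (x : X) :
    SSup α ≤ liminf (fun n : ℕ => α n x / n) atTop := by
  unfold SSup
  refine ciSup_le fun m => ?_
  set m' := m + 1 with hm'
  set Iv := ⨅ y, α m' y with hIv
  have hm'pos : (0:ℝ) < (m':ℕ) := by positivity
  have habsI : |Iv| ≤ m' * c := aux_inf_abs_le hcoc hc.2 hcont m'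
  have key : ∀ n : ℕ, 1 ≤ n → Iv / m' - 2 * m' * c / n ≤ α n x / n := by
    intro n hn
    have hnpos : (0:ℝ) < (n:ℕ) := by exact_mod_cast hn
    have hdm := Nat.div_add_mod n m'
    set q := n / m' with hq
    set r := n % m' with hr
    have hrlt : r < m' := Nat.mod_lt n (Nat.succ_pos m)
    have hblocks := aux_blocks hcoc hc.2 m' q r x
    rw [hdm] at hblocks
    -- cast equation
    have hcast : (m':ℝ) * q + r = n := by exact_mod_cast congrArg (Nat.cast : ℕ → ℝ) hdm
    rw [div_sub_div _ _ (ne_of_gt hm'pos) (ne_of_gt hnpos), div_le_div_iff₀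
      (by positivity) hnpos]
    have hrc : (r:ℝ) ≤ m' := le_of_lt (by exact_mod_cast hrlt)
    have habsI' := abs_le.mp habsI
    rw [← hIv] at hblocks
    have key2 : Iv * n - 2*m'*m'*c ≤ (q*Iv - r*c) * m' := by
      nlinarith [mul_le_mul_of_nonneg_right habsI'.2 (Nat.cast_nonneg r),
        mul_nonneg hc.1 (Nat.cast_nonneg r), hrc, hc.1, hcast, hm'pos]
    nlinarith [mul_le_mul_of_nonneg_right key2 hnpos.le,
      mul_le_mul_of_nonneg_right hblocks (mul_pos hm'pos hnpos).le]
  have htend : Tendsto (fun n : ℕ => Iv / m' - 2 * m' * c / n) atTop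
      (nhds (Iv / m')) := by
    have h0 : Tendsto (fun n : ℕ => 2 * (m':ℝ) * c / n) atTop (nhds 0) :=
      Tendsto.div_atTop tendsto_const_nhds tendsto_natCast_atTop_atTop
    simpa using tendsto_const_nhds.sub h0
  have hbdd : IsBoundedUnder (· ≥ ·) atTop (fun n : ℕ => Iv / m' - 2 * m' * c / n) := by
    exact htend.isBoundedUnder_ge
  have hcobdd : IsCoboundedUnder (· ≥ ·) atTop (fun n : ℕ => α n x / n) :=
    IsBoundedUnder.isCoboundedUnder_ge
      (isBoundedUnder_of ⟨c, fun n => le_of_abs_le (aux_div_abs_le hcoc hc n x)⟩)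
  have := liminf_le_liminf (f := atTop)
    (u := fun n : ℕ => Iv / m' - 2 * m' * c / n) (v := fun n : ℕ => α n x / n)
    (by filter_upwards [eventually_ge_atTop 1] with n hn using key n hn) hbdd hcobdd
  rw [htend.liminf_eq] at this
  have hcast2 : ((m:ℝ) + 1) = ((m' : ℕ) : ℝ) := by rw [hm']; push_cast; ring
  rw [hcast2]; exact this
end

/-- The family of "good" sets: nonempty closed invariant with minimal Birkhoff sums
bounded by the global rate. -/
def GoodSet {X : Type*} [MetricSpace X] [CompactSpace X] [Nonempty X]
    (T : X → X) (α : ℕ → X → ℝ) (Y : Set X) : Prop :=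
  Y.Nonempty ∧ IsClosed Y ∧ Set.MapsTo T Y Y ∧
    ∀ m : ℕ, ∃ y ∈ Y, α (m+1) y ≤ ((m:ℝ)+1) * SSup α

section
variable {X : Type*} [MetricSpace X] [CompactSpace X] [Nonempty X]
  {T : X → X} {α : ℕ → X → ℝ} {c : ℝ}

lemma aux_univ_good (hcoc : ∀ n m x, α (n + m) x = α n x + α m (T^[n] x))
    (hc : 0 ≤ c ∧ ∀ x, |α 1 x| ≤ c) (hcont : ∀ n, Continuous (α n)) :
    GoodSet T α (Set.univ : Set X) := by
  refine ⟨Set.univ_nonempty, isClosed_univ, Set.mapsTo_univ _ _, fun m => ?_⟩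
  obtain ⟨x₀, hx₀⟩ := aux_inf_attained hcont (m+1)
  refine ⟨x₀, Set.mem_univ _, ?_⟩
  rw [hx₀]
  have h := aux_le_SSup hcoc hc hcont m
  have hk : (0:ℝ) < (m:ℝ)+1 := by positivity
  rw [div_le_iff₀ hk] at h
  push_cast
  linarith

lemma aux_zorn (hcoc : ∀ n m x, α (n + m) x = α n x + α m (T^[n] x))
    (hc : 0 ≤ c ∧ ∀ x, |α 1 x| ≤ c) (hcont : ∀ n, Continuous (α n)) :
    ∃ M : Set X, GoodSet T α M ∧ ∀ W, GoodSet T α W → W ⊆ M → M ⊆ W := by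
  have hZ := zorn_superset_nonempty {Y : Set X | GoodSet T α Y} ?_ Set.univ
    (aux_univ_good hcoc hc hcont)
  · obtain ⟨M, -, hMmin⟩ := hZ
    exact ⟨M, hMmin.prop, fun W hW hWM => hMmin.2 hW hWM⟩
  · intro ch hch hchain hchne
    refine ⟨⋂₀ ch, ⟨?_, ?_, ?_, ?_⟩, fun Y hY => Set.sInter_subset_of_mem hY⟩
    · -- nonempty
      haveI : Nonempty ch := hchne.to_subtype
      have := IsCompact.nonempty_iInter_of_directed_nonempty_isCompact_isClosed
        (fun Y : ch => (Y : Set X)) ?_ ?_ ?_ ?_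
      · rwa [Set.sInter_eq_iInter]
      · intro Y Z
        rcases hchain.total Y.2 Z.2 with h | h
        · exact ⟨Y, subset_refl _, h⟩
        · exact ⟨Z, h, subset_refl _⟩
      · exact fun Y => (hch Y.2).1
      · exact fun Y => (hch Y.2).2.1.isCompact
      · exact fun Y => (hch Y.2).2.1
    · exact isClosed_sInter fun Y hY => (hch hY).2.1
    · intro x hx
      rw [Set.mem_sInter] at hx ⊢
      exact fun Y hY => (hch hY).2.2.1 (hx Y hY)
    · intro m
      haveI : Nonempty ch := hchne.to_subtype
      have := IsCompact.nonempty_iInter_of_directed_nonempty_isCompact_isClosed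
        (fun Y : ch => {y ∈ (Y : Set X) | α (m+1) y ≤ ((m:ℝ)+1) * SSup α}) ?_ ?_ ?_ ?_
      · obtain ⟨y, hy⟩ := this
        rw [Set.mem_iInter] at hy
        refine ⟨y, ?_, (hy ⟨_, hchne.choose_spec⟩).2⟩
        rw [Set.mem_sInter]
        exact fun Y hY => (hy ⟨Y, hY⟩).1
      · intro Y Z
        rcases hchain.total Y.2 Z.2 with h | h
        · exact ⟨Y, fun y hy => hy, fun y hy => ⟨h hy.1, hy.2⟩⟩
        · exact ⟨Z, fun y hy => ⟨h hy.1, hy.2⟩, fun y hy => hy⟩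
      · intro Y
        obtain ⟨y, hy1, hy2⟩ := (hch Y.2).2.2.2 m
        exact ⟨y, hy1, hy2⟩
      · intro Y
        exact ((hch Y.2).2.1.inter (isClosed_le (hcont (m+1)) continuous_const)).isCompact
      · intro Y
        exact (hch Y.2).2.1.inter (isClosed_le (hcont (m+1)) continuous_const)
end

section
variable {X : Type*} [MetricSpace X] [CompactSpace X] [Nonempty X]
  {T : X → X} {α : ℕ → X → ℝ} {c : ℝ}

lemma aux_exists_le (hT : Continuous T)
    (hcoc : ∀ n m x, α (n + m) x = α n x + α m (T^[n] x))
    (hc : 0 ≤ c ∧ ∀ x, |α 1 x| ≤ c) (hcont : ∀ n, Continuous (α n)) :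
    ∃ x : X, liminf (fun n : ℕ => α n x / n) atTop ≤ SSup α := by
  by_contra hcon
  push_neg at hcon
  set S := SSup α with hSdef
  obtain ⟨M, hMgood, hMmin⟩ := aux_zorn (T := T) hcoc hc hcont
  obtain ⟨hM1, hM2, hM3, hM4⟩ := hMgood
  haveI hMne : Nonempty ↥M := hM1.to_subtype
  haveI : CompactSpace ↥M := isCompact_iff_compactSpace.mp hM2.isCompact
  -- the closed "bad" sets covering M
  set Cs : ℕ × ℕ → Set ↥M := fun p =>
    {z : ↥M | ∀ n : ℕ, p.1 ≤ n → (n:ℝ) * (S + 1/((p.2:ℝ)+1)) ≤ α n (z:X)} with hCs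
  have hCclosed : ∀ p, IsClosed (Cs p) := by
    intro p
    have hrw : Cs p = ⋂ (n : ℕ), ⋂ (_ : p.1 ≤ n),
        {z : ↥M | (n:ℝ) * (S + 1/((p.2:ℝ)+1)) ≤ α n (z:X)} := by
      ext z; simp [hCs]
    rw [hrw]
    exact isClosed_iInter fun n => isClosed_iInter fun _ =>
      isClosed_le continuous_const ((hcont n).comp continuous_subtype_val)
  have hCcover : ⋃ p, Cs p = Set.univ := by
    ext z
    simp only [Set.mem_iUnion, Set.mem_univ, iff_true]
    have hz := hcon (z : X)
    obtain ⟨k, hk⟩ := exists_nat_one_div_lt (sub_pos.mpr hz)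
    have hlt : S + 1/((k:ℝ)+1) < liminf (fun n : ℕ => α n (z:X) / n) atTop := by
      linarith
    have hev := eventually_lt_of_lt_liminf hlt
      (isBoundedUnder_of ⟨-c, fun n => neg_le_of_abs_le (aux_div_abs_le hcoc hc n (z:X))⟩)
    rw [eventually_atTop] at hev
    obtain ⟨N, hN⟩ := hev
    refine ⟨(max N 1, k), fun n hn => ?_⟩
    have hn1 : 1 ≤ n := le_trans (le_max_right N 1) hn
    have hnN : N ≤ n := le_trans (le_max_left N 1) hn
    have hnpos : (0:ℝ) < n := by exact_mod_cast hn1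
    have hdiv := hN n hnN
    rw [lt_div_iff₀ hnpos] at hdiv
    linarith [le_of_lt hdiv]
  obtain ⟨p, hpint⟩ := nonempty_interior_of_iUnion_of_closed hCclosed hCcover
  set N := p.1 with hNdef
  set ε := 1/((p.2:ℝ)+1) with hεdef
  have hεpos : 0 < ε := by positivity
  obtain ⟨U, hUopen, hUeq⟩ := isOpen_induced_iff.mp
    (isOpen_interior : IsOpen (interior (Cs p)))
  have hUM : ∀ x, x ∈ M → x ∈ U → ∀ n, N ≤ n → (n:ℝ)*(S+ε) ≤ α n x := by
    intro x hx hxU n hn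
    have hmem : (⟨x, hx⟩ : ↥M) ∈ interior (Cs p) := by
      rw [← hUeq]; exact hxU
    exact interior_subset hmem n hn
  obtain ⟨z₀, hz₀⟩ := hpint
  have hUne : ∃ x ∈ M, x ∈ U := by
    refine ⟨(z₀ : X), z₀.2, ?_⟩
    rw [← hUeq] at hz₀; exact hz₀
  -- points whose orbit avoids U
  set W := {x : X | x ∈ M ∧ ∀ j : ℕ, T^[j] x ∉ U} with hWdef
  have hWclosed : IsClosed W := by
    have hrw : W = M ∩ ⋂ j : ℕ, (T^[j]) ⁻¹' Uᶜ := by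
      ext x; simp [hWdef]
    rw [hrw]
    exact hM2.inter (isClosed_iInter fun j =>
      (hUopen.isClosed_compl).preimage (hT.iterate j))
  have hOdata : ∃ (L₀ : ℕ) (δ₀ : ℝ), 0 < L₀ ∧ 0 < δ₀ ∧
      ∀ y ∈ W, (L₀:ℝ) * S + δ₀ < α L₀ y := by
    rcases Set.eq_empty_or_nonempty W with hWe | hWne
    · refine ⟨1, 1, one_pos, one_pos, fun y hy => ?_⟩
      rw [hWe] at hy; exact absurd hy (Set.notMem_empty y)
    · have hWM : W ⊆ M := fun x hx => hx.1
      have hWneqM : W ≠ M := by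
        obtain ⟨xU, hxUM, hxUU⟩ := hUne
        intro heq
        have hxW : xU ∈ W := heq ▸ hxUM
        exact hxW.2 0 (by simpa using hxUU)
      have hWmapsto : Set.MapsTo T W W := by
        rintro x ⟨hxM, hxj⟩
        refine ⟨hM3 hxM, fun j => ?_⟩
        rw [← Function.iterate_succ_apply]
        exact hxj (j+1)
      have hnotgood : ¬ (∀ m : ℕ, ∃ y ∈ W, α (m+1) y ≤ ((m:ℝ)+1) * S) := by
        intro hgood
        have hgw : GoodSet T α W := ⟨hWne, hWclosed, hWmapsto, hgood⟩
        exact hWneqM (Set.Subset.antisymm hWM (hMmin W hgw hWM))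
      push_neg at hnotgood
      obtain ⟨m₀, hm₀⟩ := hnotgood
      obtain ⟨w₀, hw₀W, hw₀min⟩ :=
        hWclosed.isCompact.exists_isMinOn hWne (hcont (m₀+1)).continuousOn
      have hw₀ := hm₀ w₀ hw₀W
      refine ⟨m₀+1, (α (m₀+1) w₀ - ((m₀:ℝ)+1)*S)/2, Nat.succ_pos m₀, by linarith, ?_⟩
      intro y hy
      have h1 : α (m₀+1) w₀ ≤ α (m₀+1) y := hw₀min hy
      push_cast
      linarith
  obtain ⟨L₀, δ₀, hL₀pos, hδ₀pos, hWO⟩ := hOdata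
  set O := {x : X | (L₀:ℝ) * S + δ₀/2 < α L₀ x} with hOdef
  have hOopen : IsOpen O := isOpen_lt continuous_const (hcont L₀)
  have hWsubO : W ⊆ O := fun y hy => lt_trans (by linarith) (hWO y hy)
  set K := M \ O with hKdef
  have hKcompact : IsCompact K := hM2.isCompact.diff hOopen
  have hKcover : K ⊆ ⋃ j : ℕ, (T^[j]) ⁻¹' U := by
    rintro x ⟨hxM, hxO⟩
    have hxW : x ∉ W := fun hw => hxO (hWsubO hw)
    rw [hWdef, Set.mem_setOf_eq] at hxW
    push_neg at hxW
    obtain ⟨j, hj⟩ := hxW hxM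
    exact Set.mem_iUnion.mpr ⟨j, hj⟩
  obtain ⟨t, ht⟩ := hKcompact.elim_finite_subcover _
    (fun j => hUopen.preimage (hT.iterate j)) hKcover
  set R := t.sup id + 1 with hRdef
  have hKR : ∀ x ∈ K, ∃ j, j < R ∧ T^[j] x ∈ U := by
    intro x hx
    obtain ⟨j, hjt, hjU⟩ := Set.mem_iUnion₂.mp (ht hx)
    exact ⟨j, Nat.lt_succ_of_le (Finset.le_sup (f := id) hjt), hjU⟩
  -- constants
  have hSabs : |S| ≤ c := aux_SSup_abs_le hcoc hc hcont
  set N' := max (max N 1) ⌈((R:ℝ) * (c + |S|) + 1)/ε⌉₊ with hN'def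
  have hN'1 : 1 ≤ N' := le_trans (le_max_right N 1) (le_max_left _ _)
  have hN'N : N ≤ N' := le_trans (le_max_left N 1) (le_max_left _ _)
  have hN'ε : (R:ℝ) * (c + |S|) + 1 ≤ (N':ℝ) * ε := by
    have h1 : ((⌈((R:ℝ)*(c+|S|)+1)/ε⌉₊ : ℕ) : ℝ) ≤ (N':ℝ) := by
      exact_mod_cast le_max_right (max N 1) ⌈((R:ℝ)*(c+|S|)+1)/ε⌉₊
    have h2 := Nat.le_ceil (((R:ℝ)*(c+|S|)+1)/ε)
    rw [div_le_iff₀ hεpos] at h2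
    calc (R:ℝ) * (c + |S|) + 1 ≤ (⌈((R:ℝ)*(c+|S|)+1)/ε⌉₊ : ℝ) * ε := h2
      _ ≤ (N':ℝ) * ε := by
          exact mul_le_mul_of_nonneg_right h1 hεpos.le
  set δ₂ := min (δ₀/2) 1 with hδ₂def
  have hδ₂pos : 0 < δ₂ := lt_min (by linarith) one_pos
  have hδ₂1 : δ₂ ≤ 1 := min_le_right _ _
  have hδ₂δ : δ₂ ≤ δ₀/2 := min_le_left _ _
  set B := max L₀ (R + N') with hBdef
  have hL₀B : L₀ ≤ B := le_max_left _ _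
  have hRN'B : R + N' ≤ B := le_max_right _ _
  have hBpos : 0 < B := lt_of_lt_of_le hL₀pos hL₀B
  have hBposR : (0:ℝ) < (B:ℕ) := by exact_mod_cast hBpos
  -- Claim A : from every point of M, a block of length ≤ B gains δ₂ over S
  have claimA : ∀ x ∈ M, ∃ L : ℕ, 1 ≤ L ∧ L ≤ B ∧ (L:ℝ) * S + δ₂ ≤ α L x := by
    intro x hxM
    by_cases hxO : x ∈ O
    · refine ⟨L₀, hL₀pos, hL₀B, ?_⟩
      rw [hOdef, Set.mem_setOf_eq] at hxO
      linarith
    · obtain ⟨j, hjR, hjU⟩ := hKR x ⟨hxM, hxO⟩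
      have hjM : T^[j] x ∈ M := hM3.iterate j hxM
      have hbad := hUM _ hjM hjU N' hN'N
      refine ⟨j + N', le_trans hN'1 (Nat.le_add_left _ _), le_trans (by omega) hRN'B, ?_⟩
      have hcocx := hcoc j N' x
      have hαj : -((j:ℝ)*c) ≤ α j x := neg_le_of_abs_le (aux_abs_le hcoc hc.2 j x)
      have hjR' : (j:ℝ) ≤ R := le_of_lt (by exact_mod_cast hjR)
      have hS1 : S ≤ |S| := le_abs_self S
      have hS2 : -|S| ≤ S := neg_abs_le S
      have hcabs : (0:ℝ) ≤ c + |S| := add_nonneg hc.1 (abs_nonneg S)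
      have hj0 : (0:ℝ) ≤ (j:ℝ) := Nat.cast_nonneg j
      have hjS : (j:ℝ)*S ≤ (j:ℝ)*|S| := mul_le_mul_of_nonneg_left hS1 hj0
      have hjRc : (j:ℝ)*(c+|S|) ≤ (R:ℝ)*(c+|S|) := mul_le_mul_of_nonneg_right hjR' hcabs
      rw [hcocx]
      push_cast
      linarith [hαj, hbad, hN'ε, hδ₂1, hjS, hjRc]
  -- Claim B : linear gain along all of M
  set C₀ := (B:ℝ)*(c+|S|) + δ₂ with hC₀def
  have hC₀pos : 0 < C₀ :=
    lt_of_lt_of_le hδ₂pos (le_add_of_nonneg_left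
      (mul_nonneg hBposR.le (add_nonneg hc.1 (abs_nonneg S))))
  have claimB : ∀ m : ℕ, ∀ x ∈ M,
      (m:ℝ) * S + (δ₂/B) * m - C₀ ≤ α m x := by
    intro m
    induction m using Nat.strong_induction_on with
    | _ m ih =>
      intro x hxM
      by_cases hmB : m < B
      · have h1 : -((m:ℝ)*c) ≤ α m x := neg_le_of_abs_le (aux_abs_le hcoc hc.2 m x)
        have hmB' : (m:ℝ) ≤ (B:ℕ) := by exact_mod_cast hmB.le
        have h2 : (δ₂/B)*(m:ℝ) ≤ δ₂ := by
          rw [div_mul_eq_mul_div, div_le_iff₀ hBposR]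
          exact mul_le_mul_of_nonneg_left hmB' hδ₂pos.le
        have hS1 : S ≤ |S| := le_abs_self S
        have hm0 : (0:ℝ) ≤ m := Nat.cast_nonneg m
        have hmS : (m:ℝ)*S ≤ (m:ℝ)*|S| := mul_le_mul_of_nonneg_left hS1 hm0
        have hmBc : (m:ℝ)*(c+|S|) ≤ (B:ℝ)*(c+|S|) :=
          mul_le_mul_of_nonneg_right hmB' (add_nonneg hc.1 (abs_nonneg S))
        rw [hC₀def]
        linarith [h1, h2, hmS, hmBc]
      · push_neg at hmB
        obtain ⟨L, hL1, hLB, hLbound⟩ := claimA x hxM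
        have hLm : L ≤ m := le_trans hLB hmB
        have heq : α m x = α L x + α (m - L) (T^[L] x) := by
          have h := hcoc L (m - L) x
          rwa [Nat.add_sub_cancel' hLm] at h
        have hihx := ih (m - L) (by omega) (T^[L] x) (hM3.iterate L hxM)
        have hcast : ((m - L : ℕ):ℝ) = (m:ℝ) - (L:ℝ) := Nat.cast_sub hLm
        rw [hcast] at hihx
        have hexp : (δ₂/B)*((m:ℝ) - (L:ℝ)) = (δ₂/B)*(m:ℝ) - (δ₂/B)*(L:ℝ) := by ring
        rw [hexp] at hihx
        have hLB' : (L:ℝ) ≤ (B:ℕ) := by exact_mod_cast hLB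
        have hL1' : (1:ℝ) ≤ (L:ℝ) := by exact_mod_cast hL1
        have h3 : (δ₂/B)*(L:ℝ) ≤ δ₂ := by
          rw [div_mul_eq_mul_div, div_le_iff₀ hBposR]
          exact mul_le_mul_of_nonneg_left hLB' hδ₂pos.le
        rw [heq]
        linarith [hLbound, hihx, h3]
  -- final contradiction
  set m₁ := ⌈C₀ * B / δ₂⌉₊ with hm₁def
  obtain ⟨y, hyM, hy⟩ := hM4 m₁
  have h2 := claimB (m₁+1) y hyM
  have h3 : C₀ < (δ₂/B) * ((m₁:ℝ)+1) := by
    have h4 := Nat.le_ceil (C₀ * B / δ₂)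
    rw [div_le_iff₀ hδ₂pos] at h4
    rw [div_mul_eq_mul_div, lt_div_iff₀ hBposR]
    nlinarith [hδ₂pos]
  push_cast at h2 hy
  linarith [h2, hy, h3]
end

theorem additive_cocycle_inf_attained
    {X : Type*} [MetricSpace X] [CompactSpace X] [Nonempty X]
    (T : X → X) (hT : Continuous T)
    (α : ℕ → X → ℝ)
    (hcont : ∀ n, Continuous (α n))
    (hcoc : ∀ n m x, α (n + m) x = α n x + α m (T^[n] x)) :
    ∃ x' : X, liminf (fun n : ℕ => α n x' / n) atTop
      = ⨅ x : X, liminf (fun n : ℕ => α n x / n) atTop := by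
  obtain ⟨c, hc0, hcb⟩ := aux_exists_bound (hcont 1)
  have hc : 0 ≤ c ∧ ∀ x, |α 1 x| ≤ c := ⟨hc0, hcb⟩
  obtain ⟨x', hx'⟩ := aux_exists_le hT hcoc hc hcont
  have hge : ∀ x : X, SSup α ≤ liminf (fun n : ℕ => α n x / n) atTop :=
    fun x => aux_liminf_ge hcoc hc hcont x
  have hx'eq : liminf (fun n : ℕ => α n x' / n) atTop = SSup α :=
    le_antisymm hx' (hge x')
  have hiInf : (⨅ x : X, liminf (fun n : ℕ => α n x / n) atTop) = SSup α := by
    refine le_antisymm ?_ (le_ciInf hge)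
    have hbdd : BddBelow (Set.range fun x : X => liminf (fun n : ℕ => α n x / n) atTop) := by
      refine ⟨SSup α, ?_⟩
      rintro r ⟨x, rfl⟩
      exact hge x
    exact (ciInf_le hbdd x').trans (le_of_eq hx'eq)
  exact ⟨x', by rw [hx'eq, hiInf]⟩
end
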